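/- Resolution-style validity splitting: for any formulas represented as X = A ∪ B ∪ E_1 (clauses, with each clause of A containing l, each of B containing l*, E_1 containing neither) and Y = C ∪ D ∪ E_2 (conjunctions of literals, each of C containing l*, each of D containing l, E_2 containing neither), the implication ⋀X → ⋁Y is valid if and only if both ⋀(A \ l) ∧ ⋀E_1 → ⋁(C \ l*) ∨ ⋁E_2 and ⋀(B \ l*) ∧ ⋀E_1 → ⋁(D \ l) ∨ ⋁E_2 are valid, where A \ l denotes the clauses of A with l removed, etc. -/

import Mathlib

/-- Propositional formulas over variables indexed by naturals. -/
inductive PropForm where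
  | var : Nat → PropForm
  | fls : PropForm
  | tru : PropForm
  | neg : PropForm → PropForm
  | conj : PropForm → PropForm → PropForm
  | disj : PropForm → PropForm → PropForm
deriving DecidableEq

/-- Classical Boolean evaluation of a formula under a valuation. -/
def PropForm.eval (v : Nat → Bool) : PropForm → Bool
  | .var n => v n
  | .fls => false
  | .tru => true
  | .neg A => !(A.eval v)
  | .conj A B => A.eval v && B.eval v
  | .disj A B => A.eval v || B.eval v

/-- The propositional variables occurring in a formula. -/
def PropForm.vars : PropForm → Finset Nat
  | .var n => {n}
  | .fls => ∅
  | .tru => ∅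
  | .neg A => A.vars
  | .conj A B => A.vars ∪ B.vars
  | .disj A B => A.vars ∪ B.vars

/-- A formula is valid iff true under every valuation. -/
def PropForm.Valid (A : PropForm) : Prop := ∀ v : Nat → Bool, A.eval v = true

/-- Literals: a variable or its negation. -/
inductive Lit where
  | pos : Nat → Lit
  | neg : Nat → Lit
deriving DecidableEq

/-- The complement of a literal. -/
def Lit.compl : Lit → Lit
  | .pos n => .neg n
  | .neg n => .pos n

/-- The variable of a literal. -/
def Lit.var : Lit → Nat
  | .pos n => n
  | .neg n => n

/-- Evaluation of a literal. -/
def Lit.eval (v : Nat → Bool) : Lit → Bool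
  | .pos n => v n
  | .neg n => !(v n)

/-- A literal as a formula. -/
def Lit.toForm : Lit → PropForm
  | .pos n => .var n
  | .neg n => .neg (.var n)

/-- A clause (finite set of literals read disjunctively) is satisfied by `v`. -/
def clauseSat (v : Nat → Bool) (C : Finset Lit) : Prop := ∃ l ∈ C, l.eval v = true

/-- A conjunction of literals (finite set read conjunctively) is satisfied by `v`. -/
def cubeSat (v : Nat → Bool) (C : Finset Lit) : Prop := ∀ l ∈ C, l.eval v = true


/-!
Split on the value of `l`. Under a valuation making `l` false, the clauses of `B` hold, the cubes
of `D` fail, and erasing `l` from the clauses of `A` or `l*` from the cubes of `C` does not change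
their truth value, so the reduced implication yields the full one at such valuations. Conversely,
an arbitrary valuation can be changed at the variable of `l` to make `l` false: this only makes
`l*` true, which keeps the reduced clauses satisfied and does not affect `E₁`, `E₂` or the cubes
of `C` with `l*` erased. The case `l` true is the same with `l` and `l*` exchanged.
-/

namespace Lit

lemma compl_compl (l : Lit) : l.compl.compl = l := by cases l <;> rfl

lemma eval_compl (l : Lit) (v : Nat → Bool) : l.compl.eval v = !l.eval v := by
  cases l <;> simp [eval, compl]

lemma eq_or_eq_compl_of_var_eq {m l : Lit} (h : m.var = l.var) : m = l ∨ m = l.compl := by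
  cases m <;> cases l <;> simp_all [var, compl]

lemma exists_eval_eq_false (l : Lit) (v : Nat → Bool) :
    ∃ w : Nat → Bool, l.eval w = false ∧ ∀ n ≠ l.var, w n = v n := by
  cases l with
  | pos n => exact ⟨Function.update v n false, by simp [eval], fun _ hm => by simp_all [var]⟩
  | neg n => exact ⟨Function.update v n true, by simp [eval], fun _ hm => by simp_all [var]⟩

lemma eval_eq_of_ne_of_ne {l m : Lit} {v w : Nat → Bool} (hw : ∀ n ≠ l.var, w n = v n)
    (hl : m ≠ l) (hlc : m ≠ l.compl) : m.eval w = m.eval v := by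
  have hvar : m.var ≠ l.var := fun h => (eq_or_eq_compl_of_var_eq h).elim hl hlc
  cases m <;> simp only [eval, var] at hvar ⊢ <;> rw [hw _ hvar]

lemma forall_valuation_split (l : Lit) (P : (Nat → Bool) → Prop) :
    (∀ v, P v) ↔ (∀ v, l.eval v = false → P v) ∧ (∀ v, l.compl.eval v = false → P v) := by
  refine ⟨fun h => ⟨fun v _ => h v, fun v _ => h v⟩, fun ⟨hf, ht⟩ v => ?_⟩
  cases hl : l.eval v
  · exact hf v hl
  · exact ht v (by simp [eval_compl, hl])

end Lit

section Satisfaction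

variable {v w : Nat → Bool} {S : Finset Lit}

lemma clauseSat_congr (h : ∀ m ∈ S, m.eval w = m.eval v) : clauseSat w S ↔ clauseSat v S :=
  exists_congr fun m => and_congr_right fun hm => by rw [h m hm]

lemma cubeSat_congr (h : ∀ m ∈ S, m.eval w = m.eval v) : cubeSat w S ↔ cubeSat v S :=
  forall₂_congr fun m hm => by rw [h m hm]

lemma clauseSat_erase_iff {l : Lit} (hl : l.eval v = false) :
    clauseSat v (S.erase l) ↔ clauseSat v S := by
  refine ⟨fun ⟨m, hm, hmv⟩ => ⟨m, Finset.mem_of_mem_erase hm, hmv⟩, fun ⟨m, hm, hmv⟩ => ?_⟩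
  refine ⟨m, Finset.mem_erase.2 ⟨?_, hm⟩, hmv⟩
  rintro rfl
  simp [hl] at hmv

lemma cubeSat_erase_iff {l : Lit} (hl : l.eval v = true) :
    cubeSat v (S.erase l) ↔ cubeSat v S := by
  refine ⟨fun h m hm => ?_, fun h m hm => h m (Finset.mem_of_mem_erase hm)⟩
  by_cases hml : m = l
  · exact hml ▸ hl
  · exact h m (Finset.mem_erase.2 ⟨hml, hm⟩)

end Satisfaction

section Splitting

variable (l : Lit) (A B E₁ C D E₂ : Finset (Finset Lit))

lemma reduced_of_entails_of_eval_false
    (hB : ∀ Cl ∈ B, l.compl ∈ Cl)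
    (hE₁ : ∀ Cl ∈ E₁, l ∉ Cl ∧ l.compl ∉ Cl)
    (hD : ∀ Cu ∈ D, l ∈ Cu)
    (hE₂ : ∀ Cu ∈ E₂, l ∉ Cu ∧ l.compl ∉ Cu)
    (h : ∀ v, l.eval v = false → (∀ Cl ∈ A ∪ B ∪ E₁, clauseSat v Cl) →
      ∃ Cu ∈ C ∪ D ∪ E₂, cubeSat v Cu)
    (v : Nat → Bool)
    (hA : ∀ Cl ∈ A, clauseSat v (Cl.erase l)) (hE₁v : ∀ Cl ∈ E₁, clauseSat v Cl) :
    (∃ Cu ∈ C, cubeSat v (Cu.erase l.compl)) ∨ (∃ Cu ∈ E₂, cubeSat v Cu) := by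
  obtain ⟨w, hwl, hw⟩ := l.exists_eval_eq_false v
  have hwlc : l.compl.eval w = true := by simp [Lit.eval_compl, hwl]
  have agree : ∀ S : Finset Lit, l ∉ S → l.compl ∉ S → ∀ m ∈ S, m.eval w = m.eval v :=
    fun S hl hlc m hm => Lit.eval_eq_of_ne_of_ne hw (ne_of_mem_of_not_mem hm hl)
      (ne_of_mem_of_not_mem hm hlc)
  have hAw (Cl) (hCl : Cl ∈ A) : clauseSat w Cl := by
    by_cases hlc : l.compl ∈ Cl
    · exact ⟨_, hlc, hwlc⟩
    · have hlc' : l.compl ∉ Cl.erase l := fun h => hlc (Finset.mem_of_mem_erase h)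
      exact (clauseSat_erase_iff hwl).1
        ((clauseSat_congr (agree _ (Finset.notMem_erase l Cl) hlc')).2 (hA Cl hCl))
  have hE₁w (Cl) (hCl : Cl ∈ E₁) : clauseSat w Cl :=
    (clauseSat_congr (agree Cl (hE₁ Cl hCl).1 (hE₁ Cl hCl).2)).2 (hE₁v Cl hCl)
  obtain ⟨Cu, hCu, hsat⟩ := h w hwl fun Cl hCl => by
    simp only [Finset.mem_union] at hCl
    rcases hCl with (hCl | hCl) | hCl
    exacts [hAw Cl hCl, ⟨_, hB Cl hCl, hwlc⟩, hE₁w Cl hCl]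
  simp only [Finset.mem_union] at hCu
  rcases hCu with (hCu | hCu) | hCu
  · have hl : l ∉ Cu.erase l.compl := fun h => by
      simpa [hwl] using hsat l (Finset.mem_of_mem_erase h)
    exact .inl ⟨Cu, hCu, (cubeSat_congr (agree _ hl (Finset.notMem_erase _ Cu))).1
      ((cubeSat_erase_iff hwlc).2 hsat)⟩
  · simpa [hwl] using hsat l (hD Cu hCu)
  · exact .inr ⟨Cu, hCu, (cubeSat_congr (agree Cu (hE₂ Cu hCu).1 (hE₂ Cu hCu).2)).1 hsat⟩

lemma entails_of_eval_false_iff_reduced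
    (hB : ∀ Cl ∈ B, l.compl ∈ Cl)
    (hE₁ : ∀ Cl ∈ E₁, l ∉ Cl ∧ l.compl ∉ Cl)
    (hD : ∀ Cu ∈ D, l ∈ Cu)
    (hE₂ : ∀ Cu ∈ E₂, l ∉ Cu ∧ l.compl ∉ Cu) :
    (∀ v, l.eval v = false → (∀ Cl ∈ A ∪ B ∪ E₁, clauseSat v Cl) →
        ∃ Cu ∈ C ∪ D ∪ E₂, cubeSat v Cu) ↔
      (∀ v : Nat → Bool,
        ((∀ Cl ∈ A, clauseSat v (Cl.erase l)) ∧ (∀ Cl ∈ E₁, clauseSat v Cl)) →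
        (∃ Cu ∈ C, cubeSat v (Cu.erase l.compl)) ∨ (∃ Cu ∈ E₂, cubeSat v Cu)) := by
  refine ⟨fun h v ⟨hA, hE₁v⟩ =>
    reduced_of_entails_of_eval_false l A B E₁ C D E₂ hB hE₁ hD hE₂ h v hA hE₁v, ?_⟩
  intro h v hl hX
  have hlc : l.compl.eval v = true := by simp [Lit.eval_compl, hl]
  rcases h v ⟨fun Cl hCl => (clauseSat_erase_iff hl).2 (hX Cl (by simp [hCl])),
      fun Cl hCl => hX Cl (by simp [hCl])⟩ with ⟨Cu, hCu, hsat⟩ | ⟨Cu, hCu, hsat⟩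
  · exact ⟨Cu, by simp [hCu], (cubeSat_erase_iff hlc).1 hsat⟩
  · exact ⟨Cu, by simp [hCu], hsat⟩

end Splitting

theorem stmt17 (l : Lit) (A B E₁ C D E₂ : Finset (Finset Lit))
    (hA : ∀ Cl ∈ A, l ∈ Cl)
    (hB : ∀ Cl ∈ B, l.compl ∈ Cl)
    (hE₁ : ∀ Cl ∈ E₁, l ∉ Cl ∧ l.compl ∉ Cl)
    (hC : ∀ Cu ∈ C, l.compl ∈ Cu)
    (hD : ∀ Cu ∈ D, l ∈ Cu)
    (hE₂ : ∀ Cu ∈ E₂, l ∉ Cu ∧ l.compl ∉ Cu) :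
    (∀ v : Nat → Bool, (∀ Cl ∈ A ∪ B ∪ E₁, clauseSat v Cl) →
        ∃ Cu ∈ C ∪ D ∪ E₂, cubeSat v Cu) ↔
      ((∀ v : Nat → Bool,
          ((∀ Cl ∈ A, clauseSat v (Cl.erase l)) ∧ (∀ Cl ∈ E₁, clauseSat v Cl)) →
          (∃ Cu ∈ C, cubeSat v (Cu.erase l.compl)) ∨ (∃ Cu ∈ E₂, cubeSat v Cu)) ∧
       (∀ v : Nat → Bool,
          ((∀ Cl ∈ B, clauseSat v (Cl.erase l.compl)) ∧ (∀ Cl ∈ E₁, clauseSat v Cl)) →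
          (∃ Cu ∈ D, cubeSat v (Cu.erase l)) ∨ (∃ Cu ∈ E₂, cubeSat v Cu))) := by
  have hlc := entails_of_eval_false_iff_reduced l.compl B A E₁ D C E₂
    (by simpa [Lit.compl_compl] using hA)
    (fun Cl hCl => ⟨(hE₁ Cl hCl).2, l.compl_compl.symm ▸ (hE₁ Cl hCl).1⟩)
    (by simpa [Lit.compl_compl] using hC)
    (fun Cu hCu => ⟨(hE₂ Cu hCu).2, l.compl_compl.symm ▸ (hE₂ Cu hCu).1⟩)
  rw [Lit.compl_compl, Finset.union_comm B, Finset.union_comm D] at hlc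
  rw [← entails_of_eval_false_iff_reduced l A B E₁ C D E₂ hB hE₁ hD hE₂, ← hlc]
  exact l.forall_valuation_split _
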